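/- For every f ∈ Diff₀[0,1], one has γ(f) = 1 if and only if f'(ξ) = 1 for every fixed point ξ of f (i.e., for every ξ ∈ [0,1] with f(ξ) = ξ). -/

import Mathlib

open Set Filter

/-- The sup norm over `[0,1]` of the derivative (within `[0,1]`) of a map. -/
noncomputable def supAbsDeriv (f : ℝ → ℝ) : ℝ :=
  sSup ((fun x => |derivWithin f (Set.Icc (0:ℝ) 1) x|) '' Set.Icc (0:ℝ) 1)

/-- `IsDiff01 f g` says that `f` is a `C¹` diffeomorphism of `[0,1]` fixing `0` and `1`,
with everywhere positive derivative, and `g` is its inverse. -/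
structure IsDiff01 (f g : ℝ → ℝ) : Prop where
  mapsTo : Set.MapsTo f (Set.Icc (0:ℝ) 1) (Set.Icc (0:ℝ) 1)
  inv_mapsTo : Set.MapsTo g (Set.Icc (0:ℝ) 1) (Set.Icc (0:ℝ) 1)
  left_inv : ∀ x ∈ Set.Icc (0:ℝ) 1, g (f x) = x
  right_inv : ∀ x ∈ Set.Icc (0:ℝ) 1, f (g x) = x
  map_zero : f 0 = 0
  map_one : f 1 = 1
  contDiffOn : ContDiffOn ℝ 1 f (Set.Icc (0:ℝ) 1)
  inv_contDiffOn : ContDiffOn ℝ 1 g (Set.Icc (0:ℝ) 1)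
  deriv_pos : ∀ x ∈ Set.Icc (0:ℝ) 1, 0 < derivWithin f (Set.Icc (0:ℝ) 1) x

/-- The growth sequence `Γ_n(f) = max (‖(fⁿ)'‖_∞, ‖(f⁻ⁿ)'‖_∞)`, where `g = f⁻¹`. -/
noncomputable def Gamma (f g : ℝ → ℝ) (n : ℕ) : ℝ :=
  max (supAbsDeriv (f^[n])) (supAbsDeriv (g^[n]))

/-- `γ(f) = lim_n Γ_n(f)^(1/n) = 1`, where `g = f⁻¹`. -/
def GammaEqOne (f g : ℝ → ℝ) : Prop :=
  Filter.Tendsto (fun n : ℕ => (Gamma f g n) ^ (1/(n:ℝ))) Filter.atTop (nhds 1)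

/-- A modulus of continuity: continuous, non-decreasing, nonnegative on `[0,1]`,
vanishing at `0`, and subadditive. -/
structure IsModCont (ω : ℝ → ℝ) : Prop where
  continuousOn : ContinuousOn ω (Set.Icc (0:ℝ) 1)
  monotoneOn : MonotoneOn ω (Set.Icc (0:ℝ) 1)
  nonneg : ∀ x ∈ Set.Icc (0:ℝ) 1, 0 ≤ ω x
  map_zero : ω 0 = 0
  subadd : ∀ a b : ℝ, 0 ≤ a → 0 ≤ b → a + b ≤ 1 → ω (a + b) ≤ ω a + ω b

/-- Membership in `Diff₀^ω[0,1]`: the derivative of `f` has modulus of continuity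
controlled by `ω` up to a multiplicative constant. -/
def InDiffOmega (ω f : ℝ → ℝ) : Prop :=
  ∃ C > 0, ∀ x ∈ Set.Icc (0:ℝ) 1, ∀ y ∈ Set.Icc (0:ℝ) 1,
    |derivWithin f (Set.Icc (0:ℝ) 1) x - derivWithin f (Set.Icc (0:ℝ) 1) y| ≤ C * ω |x - y|

open scoped Topology Finset

/-!
At a fixed point `ξ` the chain rule gives `(fⁿ)'(ξ) = f'(ξ)ⁿ` and `(f⁻ⁿ)'(ξ) = f'(ξ)⁻ⁿ`, so
`γ(f) ≥ max (f'(ξ), 1 / f'(ξ))`, which forces `f'(ξ) = 1` when `γ(f) = 1`.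

Conversely, assume `f' = 1` at every fixed point and fix `c > 1`. The compact set `K` where
`|f'| ≥ c` contains no fixed point, so `f` moves every point of `K` by at least some `δ > 0`.
Since `f` is increasing, every orbit is monotone and has total displacement at most `1`, hence it
visits `K` at most `N ≈ 1 / δ` times. Writing `(fⁿ)'(x)` as the product of `f'` along the orbit
gives `‖(fⁿ)'‖_∞ ≤ Lᴺ cⁿ` with `L = ‖f'‖_∞`; the same holds for `f⁻¹`, and `c` is arbitrary.
Finally `Γ_n ≥ 1` by the mean value theorem.
-/

section Iterate

variable {𝕜 : Type*} [NontriviallyNormedField 𝕜] {f : 𝕜 → 𝕜} {s : Set 𝕜}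

theorem ContDiffOn.iterate {n : WithTop ℕ∞} (hf : ContDiffOn 𝕜 n f s) (hs : MapsTo f s s)
    (k : ℕ) : ContDiffOn 𝕜 n f^[k] s := by
  induction k with
  | zero => exact contDiffOn_id
  | succ k ih => rw [Function.iterate_succ']; exact hf.comp ih (hs.iterate k)

theorem DifferentiableOn.hasDerivWithinAt_iterate (hf : DifferentiableOn 𝕜 f s)
    (hs : MapsTo f s s) {x : 𝕜} (hx : x ∈ s) (n : ℕ) :
    HasDerivWithinAt f^[n] (∏ k ∈ Finset.range n, derivWithin f s (f^[k] x)) s x := by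
  induction n with
  | zero => simpa using hasDerivWithinAt_id x s
  | succ n ih =>
    rw [Function.iterate_succ', Finset.prod_range_succ, mul_comm]
    exact (hf _ (hs.iterate n hx)).hasDerivWithinAt.comp x ih (hs.iterate n)

end Iterate

theorem MonotoneOn.monotone_iterate_of_le_map {α : Type*} [Preorder α] {f : α → α} {s : Set α}
    (hf : MonotoneOn f s) (hs : MapsTo f s s) {x : α} (hx : x ∈ s) (hfx : x ≤ f x) :
    Monotone fun n => f^[n] x := by
  refine monotone_nat_of_le_succ fun k => ?_
  induction k with
  | zero => simpa using hfx
  | succ k ih =>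
    rw [Function.iterate_succ_apply' f k x, Function.iterate_succ_apply' f (k + 1) x]
    exact hf (hs.iterate k hx) (hs.iterate (k + 1) hx) ih

theorem MonotoneOn.monotone_or_antitone_iterate {α : Type*} [LinearOrder α] {f : α → α}
    {s : Set α} (hf : MonotoneOn f s) (hs : MapsTo f s s) {x : α} (hx : x ∈ s) :
    (Monotone fun n => f^[n] x) ∨ Antitone fun n => f^[n] x :=
  (le_total x (f x)).imp (hf.monotone_iterate_of_le_map hs hx)
    (hf.dual.monotone_iterate_of_le_map hs hx)

theorem mul_card_filter_le_abs_sub {u : ℕ → ℝ} (hu : Monotone u ∨ Antitone u) (δ : ℝ)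
    (n : ℕ) : δ * #{k ∈ Finset.range n | δ ≤ |u (k + 1) - u k|} ≤ |u n - u 0| := by
  have htotal : ∑ k ∈ Finset.range n, |u (k + 1) - u k| = |u n - u 0| := by
    rcases hu with hu | hu
    · rw [abs_of_nonneg (sub_nonneg.2 (hu (Nat.zero_le n))), ← Finset.sum_range_sub]
      exact Finset.sum_congr rfl fun k _ => abs_of_nonneg (sub_nonneg.2 (hu k.le_succ))
    · rw [abs_of_nonpos (sub_nonpos.2 (hu (Nat.zero_le n))), neg_sub, ← Finset.sum_range_sub']
      exact Finset.sum_congr rfl fun k _ => by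
        rw [abs_of_nonpos (sub_nonpos.2 (hu k.le_succ)), neg_sub]
  calc δ * #{k ∈ Finset.range n | δ ≤ |u (k + 1) - u k|}
      = ∑ k ∈ Finset.range n with δ ≤ |u (k + 1) - u k|, δ := by
        rw [Finset.sum_const, nsmul_eq_mul, mul_comm]
    _ ≤ ∑ k ∈ Finset.range n with δ ≤ |u (k + 1) - u k|, |u (k + 1) - u k| :=
        Finset.sum_le_sum fun k hk => (Finset.mem_filter.1 hk).2
    _ ≤ ∑ k ∈ Finset.range n, |u (k + 1) - u k| :=
        Finset.sum_le_sum_of_subset_of_nonneg (Finset.filter_subset _ _)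
          fun _ _ _ => abs_nonneg _
    _ = |u n - u 0| := htotal

theorem exists_card_filter_iterate_mem_le {f : ℝ → ℝ} {a b : ℝ} {K : Set ℝ}
    [DecidablePred (· ∈ K)] (hmono : MonotoneOn f (Icc a b))
    (hmaps : MapsTo f (Icc a b) (Icc a b)) (hK : IsCompact K)
    (hcont : ContinuousOn f K) (hfix : ∀ x ∈ K, f x ≠ x) :
    ∃ N : ℕ, ∀ x ∈ Icc a b, ∀ n : ℕ, #{k ∈ Finset.range n | f^[k] x ∈ K} ≤ N := by
  obtain ⟨δ, hδ, hδK⟩ := hK.exists_forall_le' (f := fun y => |f y - y|)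
    (hcont.sub continuousOn_id).abs
    fun x hx => abs_pos.2 (sub_ne_zero.2 (hfix x hx))
  refine ⟨⌈(b - a) / δ⌉₊, fun x hx n => ?_⟩
  set u : ℕ → ℝ := fun k => f^[k] x
  have hvisit :
      #{k ∈ Finset.range n | u k ∈ K} ≤ #{k ∈ Finset.range n | δ ≤ |u (k + 1) - u k|} :=
    Finset.card_le_card <| Finset.monotone_filter_right _ fun k _ hk => by
      simpa only [u, Function.iterate_succ_apply'] using hδK _ hk
  have hdisp : |u n - u 0| ≤ b - a := by
    have hn := hmaps.iterate n hx
    show |f^[n] x - x| ≤ b - a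
    exact abs_sub_le_iff.2 ⟨by linarith [hn.2, hx.1], by linarith [hn.1, hx.2]⟩
  have hcard : (#{k ∈ Finset.range n | u k ∈ K} : ℝ) ≤ (b - a) / δ := by
    rw [le_div_iff₀ hδ, mul_comm]
    calc δ * (#{k ∈ Finset.range n | u k ∈ K} : ℝ)
        ≤ δ * #{k ∈ Finset.range n | δ ≤ |u (k + 1) - u k|} := by gcongr
      _ ≤ b - a := (mul_card_filter_le_abs_sub
          (hmono.monotone_or_antitone_iterate hmaps hx) δ n).trans hdisp
  exact_mod_cast hcard.trans (Nat.le_ceil _)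

theorem Finset.prod_le_pow_mul_pow {ι : Type*} (s : Finset ι) (p : ι → Prop) [DecidablePred p]
    {a : ι → ℝ} {L c : ℝ} {N : ℕ} (h0 : ∀ i ∈ s, 0 ≤ a i) (hL : ∀ i ∈ s, a i ≤ L)
    (hc : ∀ i ∈ s, ¬ p i → a i ≤ c) (hL1 : 1 ≤ L) (hc1 : 1 ≤ c) (hN : #{i ∈ s | p i} ≤ N) :
    ∏ i ∈ s, a i ≤ L ^ N * c ^ #s := by
  rw [← Finset.prod_filter_mul_prod_filter_not s p]
  gcongr
  · exact Finset.prod_nonneg fun i hi => h0 i (Finset.mem_filter.1 hi).1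
  · calc ∏ i ∈ s with p i, a i ≤ ∏ i ∈ s with p i, L :=
          Finset.prod_le_prod (fun i hi => h0 i (Finset.mem_filter.1 hi).1)
            fun i hi => hL i (Finset.mem_filter.1 hi).1
      _ ≤ L ^ N := by rw [Finset.prod_const]; exact pow_le_pow_right₀ hL1 hN
  · calc ∏ i ∈ s with ¬ p i, a i ≤ ∏ i ∈ s with ¬ p i, c :=
          Finset.prod_le_prod (fun i hi => h0 i (Finset.mem_filter.1 hi).1)
            fun i hi => hc i (Finset.mem_filter.1 hi).1 (Finset.mem_filter.1 hi).2
      _ ≤ c ^ #s := by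
        rw [Finset.prod_const]; exact pow_le_pow_right₀ hc1 (Finset.card_filter_le _ _)

theorem le_one_of_pow_le_of_tendsto_rpow {G : ℕ → ℝ} {r : ℝ} (hr : 0 ≤ r)
    (hG : ∀ n, r ^ n ≤ G n) (hlim : Tendsto (fun n : ℕ => G n ^ (1 / (n : ℝ))) atTop (𝓝 1)) :
    r ≤ 1 := by
  refine ge_of_tendsto hlim ?_
  filter_upwards [eventually_ne_atTop 0] with n hn
  calc r = (r ^ n) ^ (1 / (n : ℝ)) := by rw [one_div, Real.pow_rpow_inv_natCast hr hn]
    _ ≤ G n ^ (1 / (n : ℝ)) := Real.rpow_le_rpow (by positivity) (hG n) (by positivity)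

theorem tendsto_rpow_one_div_of_le_mul_pow {G : ℕ → ℝ} (hG1 : ∀ n, 1 ≤ G n)
    (hG : ∀ c > 1, ∃ C, ∀ n, G n ≤ C * c ^ n) :
    Tendsto (fun n : ℕ => G n ^ (1 / (n : ℝ))) atTop (𝓝 1) := by
  rw [tendsto_order]
  refine ⟨fun a ha => Eventually.of_forall fun n =>
    ha.trans_le (Real.one_le_rpow (hG1 n) (by positivity)), fun a ha => ?_⟩
  obtain ⟨c, hc1, hca⟩ := exists_between ha
  obtain ⟨C, hC⟩ := hG c hc1
  have hc0 : 0 < c := by linarith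
  have hpow : Tendsto (fun n : ℕ => (a / c) ^ n) atTop atTop :=
    tendsto_pow_atTop_atTop_of_one_lt ((one_lt_div hc0).2 hca)
  filter_upwards [hpow.eventually_gt_atTop C, eventually_ne_atTop 0] with n hCn hn
  have hGa : G n < a ^ n := calc
    G n ≤ C * c ^ n := hC n
    _ < (a / c) ^ n * c ^ n := by gcongr
    _ = a ^ n := by rw [div_pow, div_mul_cancel₀ _ (by positivity)]
  have hn' : (0 : ℝ) < 1 / n := one_div_pos.2 (Nat.cast_pos.2 (Nat.pos_of_ne_zero hn))
  calc G n ^ (1 / (n : ℝ)) < (a ^ n) ^ (1 / (n : ℝ)) :=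
        Real.rpow_lt_rpow (zero_le_one.trans (hG1 n)) hGa hn'
    _ = a := by rw [one_div, Real.pow_rpow_inv_natCast (by linarith) hn]

section SupAbsDeriv

variable {F : ℝ → ℝ}

theorem supAbsDeriv_le {B : ℝ} (h : ∀ x ∈ Icc (0 : ℝ) 1, |derivWithin F (Icc 0 1) x| ≤ B) :
    supAbsDeriv F ≤ B :=
  csSup_le ((nonempty_Icc.2 zero_le_one).image _) (by rintro _ ⟨x, hx, rfl⟩; exact h x hx)

theorem abs_derivWithin_le_supAbsDeriv (hF : ContDiffOn ℝ 1 F (Icc 0 1)) {x : ℝ}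
    (hx : x ∈ Icc (0 : ℝ) 1) : |derivWithin F (Icc 0 1) x| ≤ supAbsDeriv F :=
  le_csSup (isCompact_Icc.bddAbove_image
    (hF.continuousOn_derivWithin (uniqueDiffOn_Icc one_pos) le_rfl).abs) ⟨x, hx, rfl⟩

theorem one_le_supAbsDeriv (hF : ContDiffOn ℝ 1 F (Icc 0 1)) (h0 : F 0 = 0) (h1 : F 1 = 1) :
    1 ≤ supAbsDeriv F := by
  obtain ⟨c, hc, hslope⟩ := exists_deriv_eq_slope F zero_lt_one hF.continuousOn
    ((hF.differentiableOn one_ne_zero).mono Ioo_subset_Icc_self)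
  have hc1 : derivWithin F (Icc 0 1) c = 1 := by
    rw [derivWithin_of_mem_nhds (Icc_mem_nhds hc.1 hc.2), hslope, h0, h1]; norm_num
  simpa [hc1] using abs_derivWithin_le_supAbsDeriv hF (Ioo_subset_Icc_self hc)

theorem exists_supAbsDeriv_iterate_le_mul_pow (hF : ContDiffOn ℝ 1 F (Icc 0 1))
    (hmaps : MapsTo F (Icc 0 1) (Icc 0 1)) (hmono : MonotoneOn F (Icc 0 1))
    (hfix : ∀ ξ ∈ Icc (0 : ℝ) 1, F ξ = ξ → derivWithin F (Icc 0 1) ξ = 1) {c : ℝ} (hc : 1 < c) :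
    ∃ C, ∀ n : ℕ, supAbsDeriv F^[n] ≤ C * c ^ n := by
  classical
  set φ : ℝ → ℝ := fun x => |derivWithin F (Icc 0 1) x|
  have hφ : ContinuousOn φ (Icc 0 1) :=
    (hF.continuousOn_derivWithin (uniqueDiffOn_Icc one_pos) le_rfl).abs
  obtain ⟨L, hL1, hL⟩ : ∃ L, 1 ≤ L ∧ ∀ x ∈ Icc (0 : ℝ) 1, φ x ≤ L := by
    obtain ⟨B, hB⟩ := isCompact_Icc.bddAbove_image hφ
    exact ⟨max B 1, le_max_right _ _, fun x hx => (hB ⟨x, hx, rfl⟩).trans (le_max_left _ _)⟩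
  set K := Icc 0 1 ∩ φ ⁻¹' Ici c
  have hK : IsCompact K := isCompact_Icc.of_isClosed_subset
    (hφ.preimage_isClosed_of_isClosed isClosed_Icc isClosed_Ici) inter_subset_left
  have hKfix : ∀ x ∈ K, F x ≠ x := fun x ⟨hx, hcx⟩ hFx => by
    simp only [mem_preimage, mem_Ici, φ, hfix x hx hFx, abs_one] at hcx
    linarith
  obtain ⟨N, hN⟩ := exists_card_filter_iterate_mem_le hmono hmaps hK
    (hF.continuousOn.mono inter_subset_left) hKfix
  refine ⟨L ^ N, fun n => supAbsDeriv_le fun x hx => ?_⟩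
  rw [((hF.differentiableOn one_ne_zero).hasDerivWithinAt_iterate hmaps hx n).derivWithin
    (uniqueDiffOn_Icc one_pos x hx), Finset.abs_prod]
  simpa using Finset.prod_le_pow_mul_pow (Finset.range n) (fun k => F^[k] x ∈ K)
    (fun k _ => abs_nonneg _) (fun k _ => hL _ (hmaps.iterate k hx))
    (fun k _ hk => (not_le.1 fun hck => hk ⟨hmaps.iterate k hx, hck⟩).le) hL1 hc.le
    (hN x hx n)

end SupAbsDeriv

theorem Gamma_comm (f g : ℝ → ℝ) : Gamma f g = Gamma g f :=
  funext fun _ => max_comm _ _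

theorem GammaEqOne.symm {f g : ℝ → ℝ} (h : GammaEqOne f g) : GammaEqOne g f := by
  rwa [GammaEqOne, Gamma_comm] at h

theorem derivWithin_le_one_of_gammaEqOne {f g : ℝ → ℝ} (hf : ContDiffOn ℝ 1 f (Icc 0 1))
    (hmaps : MapsTo f (Icc 0 1) (Icc 0 1)) (h : GammaEqOne f g) {ξ : ℝ}
    (hξ : ξ ∈ Icc (0 : ℝ) 1) (hfix : f ξ = ξ) : derivWithin f (Icc 0 1) ξ ≤ 1 := by
  refine (le_abs_self _).trans (le_one_of_pow_le_of_tendsto_rpow (abs_nonneg _) (fun n => ?_) h)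
  have hder := (hf.differentiableOn one_ne_zero ξ hξ).hasDerivWithinAt.iterate ξ hfix hmaps n
  calc |derivWithin f (Icc 0 1) ξ| ^ n = |derivWithin f^[n] (Icc 0 1) ξ| := by
        rw [hder.derivWithin (uniqueDiffOn_Icc one_pos ξ hξ), abs_pow]
    _ ≤ supAbsDeriv f^[n] := abs_derivWithin_le_supAbsDeriv (hf.iterate hmaps n) hξ
    _ ≤ Gamma f g n := le_max_left _ _

namespace IsDiff01

variable {f g : ℝ → ℝ}

theorem derivWithin_mul_derivWithin_inv (hf : IsDiff01 f g) {x : ℝ} (hx : x ∈ Icc (0 : ℝ) 1) :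
    derivWithin f (Icc 0 1) (g x) * derivWithin g (Icc 0 1) x = 1 := by
  have hg := (hf.inv_contDiffOn.differentiableOn one_ne_zero x hx).hasDerivWithinAt
  have hfg := (hf.contDiffOn.differentiableOn one_ne_zero _ (hf.inv_mapsTo hx)).hasDerivWithinAt
  have hid := (hfg.comp x hg hf.inv_mapsTo).congr (fun y hy => (hf.right_inv y hy).symm)
    (hf.right_inv x hx).symm
  exact (uniqueDiffOn_Icc one_pos x hx).eq_deriv _ hid (hasDerivWithinAt_id x _)

theorem inv_apply_eq_self (hf : IsDiff01 f g) {x : ℝ} (hx : x ∈ Icc (0 : ℝ) 1) (hfx : f x = x) :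
    g x = x := by
  conv_lhs => rw [← hfx]
  exact hf.left_inv x hx

theorem derivWithin_mul_derivWithin_inv_of_fixed (hf : IsDiff01 f g) {ξ : ℝ}
    (hξ : ξ ∈ Icc (0 : ℝ) 1) (hfix : f ξ = ξ) :
    derivWithin f (Icc 0 1) ξ * derivWithin g (Icc 0 1) ξ = 1 := by
  simpa [hf.inv_apply_eq_self hξ hfix] using hf.derivWithin_mul_derivWithin_inv hξ

theorem symm (hf : IsDiff01 f g) : IsDiff01 g f where
  mapsTo := hf.inv_mapsTo
  inv_mapsTo := hf.mapsTo
  left_inv := hf.right_inv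
  right_inv := hf.left_inv
  map_zero := by simpa [hf.map_zero] using hf.left_inv 0 (by norm_num)
  map_one := by simpa [hf.map_one] using hf.left_inv 1 (by norm_num)
  contDiffOn := hf.inv_contDiffOn
  inv_contDiffOn := hf.contDiffOn
  deriv_pos x hx := pos_of_mul_pos_right
    (by rw [hf.derivWithin_mul_derivWithin_inv hx]; exact one_pos)
    (hf.deriv_pos _ (hf.inv_mapsTo hx)).le

theorem monotoneOn (hf : IsDiff01 f g) : MonotoneOn f (Icc 0 1) := by
  refine (strictMonoOn_of_deriv_pos (convex_Icc 0 1) hf.contDiffOn.continuousOn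
    fun x hx => ?_).monotoneOn
  rw [interior_Icc] at hx
  rw [← derivWithin_of_mem_nhds (Icc_mem_nhds hx.1 hx.2)]
  exact hf.deriv_pos x (Ioo_subset_Icc_self hx)

theorem one_le_Gamma (hf : IsDiff01 f g) (n : ℕ) : 1 ≤ Gamma f g n :=
  (one_le_supAbsDeriv (hf.contDiffOn.iterate hf.mapsTo n) (Function.iterate_fixed hf.map_zero n)
    (Function.iterate_fixed hf.map_one n)).trans (le_max_left _ _)

end IsDiff01

/-- For `f ∈ Diff₀[0,1]`: `γ(f) = 1` if and only if `f'(ξ) = 1` for every fixed point `ξ`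
of `f` in `[0,1]`. -/
theorem gamma_eq_one_iff_deriv_fixed (f g : ℝ → ℝ) (hf : IsDiff01 f g) :
    GammaEqOne f g ↔
      ∀ ξ ∈ Set.Icc (0:ℝ) 1, f ξ = ξ → derivWithin f (Set.Icc (0:ℝ) 1) ξ = 1 := by
  constructor
  · intro h ξ hξ hfix
    have hf' := derivWithin_le_one_of_gammaEqOne hf.contDiffOn hf.mapsTo h hξ hfix
    have hg' := derivWithin_le_one_of_gammaEqOne hf.inv_contDiffOn hf.inv_mapsTo
      h.symm hξ (hf.inv_apply_eq_self hξ hfix)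
    have hmul := hf.derivWithin_mul_derivWithin_inv_of_fixed hξ hfix
    nlinarith [hf.deriv_pos ξ hξ]
  · intro hfix
    have hfix_inv : ∀ ξ ∈ Icc (0 : ℝ) 1, g ξ = ξ → derivWithin g (Icc 0 1) ξ = 1 := by
      intro ξ hξ hgξ
      have hfξ := hf.symm.inv_apply_eq_self hξ hgξ
      simpa [hfix ξ hξ hfξ] using hf.derivWithin_mul_derivWithin_inv_of_fixed hξ hfξ
    refine tendsto_rpow_one_div_of_le_mul_pow hf.one_le_Gamma fun c hc => ?_
    obtain ⟨C₁, h₁⟩ := exists_supAbsDeriv_iterate_le_mul_pow hf.contDiffOn hf.mapsTo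
      hf.monotoneOn hfix hc
    obtain ⟨C₂, h₂⟩ := exists_supAbsDeriv_iterate_le_mul_pow hf.inv_contDiffOn hf.inv_mapsTo
      hf.symm.monotoneOn hfix_inv hc
    exact ⟨max C₁ C₂, fun n => max_le ((h₁ n).trans (by gcongr; exact le_max_left _ _))
      ((h₂ n).trans (by gcongr; exact le_max_right _ _))⟩
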